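/- Let F be a non-abelian free group, Δ a decomposition of F, φ a Δ-decomposable quasimorphism, ω a bounded symmetric Δ-continuous 2-cocycle, ζ(g,g',h) = Σ_{j=1}^k φ(g_j)·ω(g_{j+1}⋯g_k g', h) for Δ(g) = (g₁,…,g_k), and η(g,h) = ζ(g,1,h). Then there is a constant C > 0 such that for all g, h, i ∈ F, |φ(g)·ω(h,i) + δ²η(g,h,i) − (ζ(d,h,i) + ζ(d⁻¹, dh, i))| ≤ C, where d is the common 2-path of (g,h). -/

import Mathlib

/-! Common definitions: free groups, reduced products, (bounded) cochains,
decompositions of a free group, Brooks and Rolli quasimorphisms. -/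

section Preamble

variable {α : Type} [DecidableEq α]

/-- Word length of an element of a free group (length of its reduced word). -/
def wlen (g : FreeGroup α) : ℕ := g.toWord.length

/-- A product `g = g₁ ⋯ g_k` is reduced (no cancellation) if the word lengths add up. -/
def ReducedProd (l : List (FreeGroup α)) : Prop :=
  wlen l.prod = (l.map wlen).sum

/-- Inhomogeneous coboundary `δ¹φ(g,h) = φ(g) + φ(h) − φ(gh)`. -/
def d1 (φ : FreeGroup α → ℝ) (g h : FreeGroup α) : ℝ := φ g + φ h - φ (g * h)

/-- Inhomogeneous coboundary `δ²η`. -/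
def d2 (η : FreeGroup α → FreeGroup α → ℝ) (g h i : FreeGroup α) : ℝ :=
  η h i - η (g * h) i + η g (h * i) - η g h

/-- Inhomogeneous coboundary `δ³β`. -/
def d3 (β : FreeGroup α → FreeGroup α → FreeGroup α → ℝ) (g h i j : FreeGroup α) : ℝ :=
  β h i j - β (g * h) i j + β g (h * i) j - β g h (i * j) + β g h i

/-- A quasimorphism on the free group. -/
def IsQuasimorphism (φ : FreeGroup α → ℝ) : Prop :=
  ∃ D > (0 : ℝ), ∀ g h : FreeGroup α, |d1 φ g h| < D

/-- A symmetric map: `φ(g⁻¹) = −φ(g)`. -/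
def IsSymmetricMap (φ : FreeGroup α → ℝ) : Prop :=
  ∀ g : FreeGroup α, φ g⁻¹ = -φ g

/-- Longest common initial sequence of two lists. -/
def commonPrefix {β : Type} [DecidableEq β] : List β → List β → List β
  | a :: as, b :: bs => if a = b then a :: commonPrefix as bs else []
  | _, _ => []

/-- Reversed, entrywise-inverted list: `(g₁, …, g_k) ↦ (g_k⁻¹, …, g₁⁻¹)`. -/
def seqInv (l : List (FreeGroup α)) : List (FreeGroup α) :=
  (l.map fun x => x⁻¹).reverse

/-- `(c̲₁⁻¹)`: the common initial sequence of `Δ(g)` and `Δ(gh)`. -/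
def cSeq1 (D : FreeGroup α → List (FreeGroup α)) (g h : FreeGroup α) : List (FreeGroup α) :=
  commonPrefix (D g) (D (g * h))

/-- `(c̲₂⁻¹)`: the common initial sequence of `Δ(g⁻¹)` and `Δ(h)`. -/
def cSeq2 (D : FreeGroup α → List (FreeGroup α)) (g h : FreeGroup α) : List (FreeGroup α) :=
  commonPrefix (D g⁻¹) (D h)

/-- `(c̲₃⁻¹)`: the common initial sequence of `Δ(h⁻¹)` and `Δ(h⁻¹g⁻¹)`. -/
def cSeq3 (D : FreeGroup α → List (FreeGroup α)) (g h : FreeGroup α) : List (FreeGroup α) :=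
  commonPrefix (D h⁻¹) (D (h⁻¹ * g⁻¹))

/-- `(r̲₁)`: middle part of `Δ(g) = (c̲₁⁻¹)·(r̲₁)·(c̲₂)`. -/
def rSeq1 (D : FreeGroup α → List (FreeGroup α)) (g h : FreeGroup α) : List (FreeGroup α) :=
  ((D g).drop (cSeq1 D g h).length).take
    ((D g).length - (cSeq1 D g h).length - (cSeq2 D g h).length)

/-- `(r̲₂)`: middle part of `Δ(h) = (c̲₂⁻¹)·(r̲₂)·(c̲₃)`. -/
def rSeq2 (D : FreeGroup α → List (FreeGroup α)) (g h : FreeGroup α) : List (FreeGroup α) :=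
  ((D h).drop (cSeq2 D g h).length).take
    ((D h).length - (cSeq2 D g h).length - (cSeq3 D g h).length)

/-- `(r̲₃)`: middle part of `Δ(h⁻¹g⁻¹) = (c̲₃⁻¹)·(r̲₃)·(c̲₁)`. -/
def rSeq3 (D : FreeGroup α → List (FreeGroup α)) (g h : FreeGroup α) : List (FreeGroup α) :=
  ((D (h⁻¹ * g⁻¹)).drop (cSeq3 D g h).length).take
    ((D (h⁻¹ * g⁻¹)).length - (cSeq3 D g h).length - (cSeq1 D g h).length)

/-- A decomposition `Δ` of the free group `F` into pieces `P` (Definition 3.1). -/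
structure Decomp (α : Type) [DecidableEq α] where
  /-- the set of pieces -/
  pieces : Set (FreeGroup α)
  /-- the decomposition map `Δ` -/
  D : FreeGroup α → List (FreeGroup α)
  /-- the uniform bound `R` on the r-parts of `Δ`-triangles -/
  R : ℕ
  R_pos : 0 < R
  pieces_symm : ∀ p ∈ pieces, p⁻¹ ∈ pieces
  one_notin_pieces : (1 : FreeGroup α) ∉ pieces
  mem_pieces : ∀ g : FreeGroup α, ∀ p ∈ D g, p ∈ pieces
  prod_eq : ∀ g : FreeGroup α, (D g).prod = g
  reduced : ∀ g : FreeGroup α, ReducedProd (D g)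
  inv_eq : ∀ g : FreeGroup α, D g⁻¹ = seqInv (D g)
  infix_closed : ∀ (g : FreeGroup α) (l₁ l₂ l₃ : List (FreeGroup α)),
    D g = l₁ ++ l₂ ++ l₃ → D l₂.prod = l₂
  triangle₁ : ∀ g h : FreeGroup α, D g = cSeq1 D g h ++ rSeq1 D g h ++ seqInv (cSeq2 D g h)
  triangle₂ : ∀ g h : FreeGroup α, D h = cSeq2 D g h ++ rSeq2 D g h ++ seqInv (cSeq3 D g h)
  triangle₃ : ∀ g h : FreeGroup α,
    D (h⁻¹ * g⁻¹) = cSeq3 D g h ++ rSeq3 D g h ++ seqInv (cSeq1 D g h)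
  rBound₁ : ∀ g h : FreeGroup α, (rSeq1 D g h).length ≤ R
  rBound₂ : ∀ g h : FreeGroup α, (rSeq2 D g h).length ≤ R
  rBound₃ : ∀ g h : FreeGroup α, (rSeq3 D g h).length ≤ R

/-- The `Δ`-decomposable map `φ_{λ,Δ}(g) = Σ_j λ(g_j)`. -/
def decQM (D : FreeGroup α → List (FreeGroup α)) (lam : FreeGroup α → ℝ)
    (g : FreeGroup α) : ℝ :=
  ((D g).map lam).sum

/-- `φ` is a `Δ`-decomposable quasimorphism (Definition 3.8). -/
def IsDecomposable (dec : Decomp α) (φ : FreeGroup α → ℝ) : Prop :=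
  ∃ lam : FreeGroup α → ℝ,
    (∃ B : ℝ, ∀ p ∈ dec.pieces, |lam p| ≤ B) ∧
    (∀ p ∈ dec.pieces, lam p⁻¹ = -lam p) ∧
    φ = decQM dec.D lam

/-- Agreement (as an extended natural number) of two sequences:
`⊤` if they are equal, otherwise the length of their common initial sequence. -/
def seqAgree {β : Type} [DecidableEq β] (l l' : List β) : ℕ∞ :=
  if l = l' then ⊤ else ((commonPrefix l l').length : ℕ∞)

/-- The quantity `N_Δ((g,h),(g',h'))` measuring how much the `Δ`-triangles of the two
pairs agree around their centres. -/
noncomputable def NDelta (D : FreeGroup α → List (FreeGroup α))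
    (p q : FreeGroup α × FreeGroup α) : ℕ∞ :=
  if p = q then ⊤
  else if rSeq1 D p.1 p.2 = rSeq1 D q.1 q.2 ∧ rSeq2 D p.1 p.2 = rSeq2 D q.1 q.2 ∧
            rSeq3 D p.1 p.2 = rSeq3 D q.1 q.2 then
    min (seqAgree (seqInv (cSeq1 D p.1 p.2)) (seqInv (cSeq1 D q.1 q.2)))
      (min (seqAgree (seqInv (cSeq2 D p.1 p.2)) (seqInv (cSeq2 D q.1 q.2)))
        (seqAgree (seqInv (cSeq3 D p.1 p.2)) (seqInv (cSeq3 D q.1 q.2))))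
  else 0

/-- A bounded symmetric `2`-cocycle `ω` is `Δ`-continuous (Definition 3.12). -/
def DeltaContinuousCocycle (D : FreeGroup α → List (FreeGroup α))
    (ω : FreeGroup α → FreeGroup α → ℝ) : Prop :=
  ∃ s : ℕ → ℝ, (∀ j, 0 ≤ s j) ∧ Summable s ∧
    ∀ p q : FreeGroup α × FreeGroup α, p ≠ q → ∀ N : ℕ, NDelta D p q = (N : ℕ∞) →
      |ω p.1 p.2 - ω q.1 q.2| ≤ s N

/-- A quasimorphism `ψ` is `Δ`-continuous: it is symmetric and `δ¹ψ` is `Δ`-continuous. -/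
def DeltaContinuousQM (D : FreeGroup α → List (FreeGroup α)) (ψ : FreeGroup α → ℝ) : Prop :=
  IsSymmetricMap ψ ∧ IsQuasimorphism ψ ∧ DeltaContinuousCocycle D (d1 ψ)

/-- `ζ`-type sums: `zetaL A (g₁,…,g_k) g' h = Σ_j A(g_j, g_{j+1}⋯g_k·g', h)`. -/
def zetaL (A : FreeGroup α → FreeGroup α → FreeGroup α → ℝ) :
    List (FreeGroup α) → FreeGroup α → FreeGroup α → ℝ
  | [], _, _ => 0
  | p :: rest, g', h => A p (rest.prod * g') h + zetaL A rest g' h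

/-- `ζ(g,g',h) = Σ_j φ(g_j)·ω(g_{j+1}⋯g_k·g', h)` for `Δ(g) = (g₁,…,g_k)`. -/
def zetaD (D : FreeGroup α → List (FreeGroup α)) (φ : FreeGroup α → ℝ)
    (ω : FreeGroup α → FreeGroup α → ℝ) (g g' h : FreeGroup α) : ℝ :=
  zetaL (fun p u v => φ p * ω u v) (D g) g' h

/-- `w` is a subword of `g` (as reduced words). -/
def Subword (w g : FreeGroup α) : Prop :=
  w.toWord <:+: g.toWord

/-- `w` is non self-overlapping: there are no reduced words `x, y` with `x` nontrivial
such that `w = xyx` as a reduced word. -/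
def NonSelfOverlapping (w : FreeGroup α) : Prop :=
  ¬∃ x y : FreeGroup α, x ≠ 1 ∧ w = x * y * x ∧ ReducedProd [x, y, x]

/-- `ν_w(g)`: the number of occurrences of `w` as a subword of the reduced word `g`. -/
def occCount (w g : FreeGroup α) : ℕ :=
  ((List.range (g.toWord.length + 1)).filter
    (fun s => decide ((g.toWord.drop s).take w.toWord.length = w.toWord))).length

/-- The Brooks counting function `φ_w = ν_w − ν_{w⁻¹}`. -/
noncomputable def brooksQM (w : FreeGroup α) (g : FreeGroup α) : ℝ :=
  (occCount w g : ℝ) - (occCount w⁻¹ g : ℝ)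

/-- `φ` is a Brooks counting quasimorphism on some non self-overlapping word. -/
def IsBrooksQM (φ : FreeGroup α → ℝ) : Prop :=
  ∃ w : FreeGroup α, NonSelfOverlapping w ∧ φ = brooksQM w

/-- The interleaved list `(u₁, w^{ε₁}, u₂, …, u_{k−1}, w^{ε_{k−1}}, u_k)` built from
`us = (u₁,…,u_k)` and signs `eps = (ε₁,…,ε_{k−1})`. -/
def wfacList (w : FreeGroup α) : List (FreeGroup α) → List Bool → List (FreeGroup α)
  | [], _ => []
  | [u], _ => [u]
  | u :: us, [] => u :: wfacList w us []
  | u :: us, e :: eps => u :: (if e then w else w⁻¹) :: wfacList w us eps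

/-- `RolliWord l` : `l = ((n₁,m₁),…,(n_k,m_k))` encodes the normal form
`x_{n₁}^{m₁} ⋯ x_{n_k}^{m_k}` (all `m_j ≠ 0`, no consecutive equal indices). -/
def RolliWord {n : ℕ} (l : List (Fin n × ℤ)) : Prop :=
  (∀ p ∈ l, p.2 ≠ 0) ∧ l.Chain' fun p q => p.1 ≠ q.1

/-- The element `x_{n₁}^{m₁} ⋯ x_{n_k}^{m_k}` encoded by `l`. -/
def rolliProd {n : ℕ} (l : List (Fin n × ℤ)) : FreeGroup (Fin n) :=
  (l.map fun p => FreeGroup.of p.1 ^ p.2).prod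

/-- `φ` is a Rolli quasimorphism. -/
def IsRolliQM {n : ℕ} (φ : FreeGroup (Fin n) → ℝ) : Prop :=
  ∃ lam : Fin n → ℤ → ℝ,
    (∀ j, ∃ B : ℝ, ∀ m : ℤ, |lam j m| ≤ B) ∧
    (∀ j m, lam j (-m) = -lam j m) ∧
    φ 1 = 0 ∧
    ∀ l : List (Fin n × ℤ), RolliWord l → φ (rolliProd l) = (l.map fun p => lam p.1 p.2).sum

/-- The list of letters (as group elements) of the reduced word representing `g`. -/
def letters (g : FreeGroup α) : List (FreeGroup α) :=
  g.toWord.map fun p => FreeGroup.mk [p]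

/-- `d` is the common 2-path of `(g,h)`: `g = t₁⁻¹d` and `h = d⁻¹t₂` as reduced words,
with the tripod condition that `gh = t₁⁻¹t₂` is also reduced. -/
def IsCommon2Path (g h d : FreeGroup α) : Prop :=
  ∃ t₁ t₂ : FreeGroup α, g = t₁⁻¹ * d ∧ h = d⁻¹ * t₂ ∧
    ReducedProd [t₁⁻¹, d] ∧ ReducedProd [d⁻¹, t₂] ∧ ReducedProd [t₁⁻¹, t₂]

/-- Case (a) of the alignment of `g, h, i` (Figure 4a). -/
def Align3A (g h i : FreeGroup α) : Prop :=
  ∃ t₁ t₂ t₃ t₄ t₅ : FreeGroup α,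
    g = t₁ * t₂ ∧ h = t₂⁻¹ * t₃ * t₄ ∧ i = t₄⁻¹ * t₅ ∧
    ReducedProd [t₁, t₂] ∧ ReducedProd [t₂⁻¹, t₃, t₄] ∧ ReducedProd [t₄⁻¹, t₅] ∧
    ReducedProd [t₁, t₃, t₅]

/-- Case (b) of the alignment of `g, h, i` (Figure 4b). -/
def Align3B (g h i : FreeGroup α) : Prop :=
  ∃ t₁ t₂ t₃ t₄ t₅ : FreeGroup α,
    g = t₁ * t₂ * t₃ ∧ h = t₃⁻¹ * t₄ ∧ i = t₄⁻¹ * t₂⁻¹ * t₅ ∧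
    ReducedProd [t₁, t₂, t₃] ∧ ReducedProd [t₃⁻¹, t₄] ∧ ReducedProd [t₄⁻¹, t₂⁻¹, t₅] ∧
    ReducedProd [t₁, t₅]

/-- Case (c) of the alignment of `g, h, i` (Figure 4c), with common 3-path `c`. -/
def Align3C (g h i c : FreeGroup α) : Prop :=
  ∃ t₁ t₂ t₃ t₄ : FreeGroup α,
    g = t₁⁻¹ * c * t₂ ∧ h = t₂⁻¹ * c⁻¹ * t₃ ∧ i = t₃⁻¹ * c * t₄ ∧
    ReducedProd [t₁⁻¹, c, t₂] ∧ ReducedProd [t₂⁻¹, c⁻¹, t₃] ∧ ReducedProd [t₃⁻¹, c, t₄] ∧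
    ReducedProd [t₁⁻¹, t₃] ∧ ReducedProd [t₂⁻¹, t₄]

/-- `c` is the common 3-path of `(g,h,i)`: `c` in case (c), the identity otherwise. -/
def IsCommon3Path (g h i c : FreeGroup α) : Prop :=
  Align3C g h i c ∨ (c = 1 ∧ (Align3A g h i ∨ Align3B g h i))

end Preamble

/-!
As `ω` is a cocycle and `φ(g) = Σⱼ φ(gⱼ)`, the quantity `φ(g)·ω(h,i) + δ²η(g,h,i)` equals
`η(h,i) − η(gh,i) + ζ(g,h,i)`. Cutting `Δ(g)`, `Δ(h)` and `Δ(gh)` along the `Δ`-triangle of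
`(g,h)`, everything except the pieces of `(c̲₂)` and of the `r`-parts cancels; the `r`-parts are
at most `R` pieces each, and the `(c̲₂)`-terms form the same paired sum over `(c̲₂)` that
`ζ(d,h,i) + ζ(d⁻¹,dh,i)` is over `Δ(d)`. Finally `Δ(d)` and `(c̲₂)` share a tail and differ in at
most `2R` pieces each, which bounds the difference of the two paired sums.
-/

section Lists

variable {β : Type}

theorem List.length_le_of_prefix_append_of_prefix_append {s v w u : List β}
    (hv : u <+: s ++ v) (hw : u <+: s ++ w)
    (hvw : ∀ c v' w', v = c :: v' → w = c :: w' → False) : u.length ≤ s.length := by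
  induction s generalizing u with
  | nil =>
    cases u with
    | nil => simp
    | cons c u' =>
      obtain ⟨v', rfl, -⟩ := List.cons_prefix_iff.1 hv
      obtain ⟨w', rfl, -⟩ := List.cons_prefix_iff.1 hw
      exact (hvw c v' w' rfl rfl).elim
  | cons a s ih =>
    cases u with
    | nil => simp
    | cons c u' => simpa using ih (List.cons_prefix_cons.1 hv).2 (List.cons_prefix_cons.1 hw).2

variable [DecidableEq β]

theorem commonPrefix_prefix_left : ∀ l₁ l₂ : List β, commonPrefix l₁ l₂ <+: l₁
  | a :: as, b :: bs => by
    rw [commonPrefix]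
    split
    · exact List.cons_prefix_cons.2 ⟨rfl, commonPrefix_prefix_left as bs⟩
    · exact List.nil_prefix
  | [], _ => List.nil_prefix
  | _ :: _, [] => List.nil_prefix

theorem commonPrefix_prefix_right : ∀ l₁ l₂ : List β, commonPrefix l₁ l₂ <+: l₂
  | a :: as, b :: bs => by
    rw [commonPrefix]
    split
    · next hab => exact List.cons_prefix_cons.2 ⟨hab, commonPrefix_prefix_right as bs⟩
    · exact List.nil_prefix
  | [], _ => List.nil_prefix
  | _ :: _, [] => List.nil_prefix

theorem prefix_commonPrefix : ∀ {π l₁ l₂ : List β}, π <+: l₁ → π <+: l₂ → π <+: commonPrefix l₁ l₂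
  | [], _, _, _, _ => List.nil_prefix
  | a :: π, l₁, l₂, h₁, h₂ => by
    obtain ⟨l₁', rfl, h₁'⟩ := List.cons_prefix_iff.1 h₁
    obtain ⟨l₂', rfl, h₂'⟩ := List.cons_prefix_iff.1 h₂
    rw [commonPrefix, if_pos rfl]
    exact List.cons_prefix_cons.2 ⟨rfl, prefix_commonPrefix h₁' h₂'⟩

theorem min_length_le_length_commonPrefix {π₁ π₂ l m₁ m₂ : List β} (h₁ : π₁ <+: l)
    (h₂ : π₂ <+: l) (hm₁ : π₁ <+: m₁) (hm₂ : π₂ <+: m₂) :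
    min π₁.length π₂.length ≤ (commonPrefix m₁ m₂).length := by
  rcases le_total π₁.length π₂.length with h | h
  · have := prefix_commonPrefix hm₁ ((List.prefix_of_prefix_length_le h₁ h₂ h).trans hm₂)
    have := this.length_le
    omega
  · have := prefix_commonPrefix ((List.prefix_of_prefix_length_le h₂ h₁ h).trans hm₁) hm₂
    have := this.length_le
    omega

end Lists

section Words

variable {α : Type}

theorem seqInv_append (l₁ l₂ : List (FreeGroup α)) :
    seqInv (l₁ ++ l₂) = seqInv l₂ ++ seqInv l₁ := by
  simp [seqInv]

theorem seqInv_cons (p : FreeGroup α) (l : List (FreeGroup α)) :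
    seqInv (p :: l) = seqInv l ++ [p⁻¹] := by
  simp [seqInv]

@[simp] theorem seqInv_seqInv (l : List (FreeGroup α)) : seqInv (seqInv l) = l := by
  simp [seqInv, List.map_reverse]

@[simp] theorem length_seqInv (l : List (FreeGroup α)) : (seqInv l).length = l.length := by
  simp [seqInv]

theorem prod_seqInv (l : List (FreeGroup α)) : (seqInv l).prod = l.prod⁻¹ := by
  rw [seqInv, ← List.prod_inv_reverse]

variable [DecidableEq α]

theorem wlen_mul_le (x y : FreeGroup α) : wlen (x * y) ≤ wlen x + wlen y := by
  simpa [wlen] using (FreeGroup.toWord_mul_sublist x y).length_le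

theorem wlen_prod_le (l : List (FreeGroup α)) : wlen l.prod ≤ (l.map wlen).sum := by
  induction l with
  | nil => simp [wlen]
  | cons p t ih =>
    simp only [List.prod_cons, List.map_cons, List.sum_cons]
    exact (wlen_mul_le _ _).trans (by omega)

theorem toWord_mul_of_wlen_mul {x y : FreeGroup α} (h : wlen (x * y) = wlen x + wlen y) :
    (x * y).toWord = x.toWord ++ y.toWord :=
  (FreeGroup.toWord_mul_sublist x y).eq_of_length (by simpa [wlen] using h)

theorem reducedProd_pair_iff {x y : FreeGroup α} :
    ReducedProd [x, y] ↔ wlen (x * y) = wlen x + wlen y := by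
  simp [ReducedProd]

theorem ReducedProd.toWord_mul {x y : FreeGroup α} (h : ReducedProd [x, y]) :
    (x * y).toWord = x.toWord ++ y.toWord :=
  toWord_mul_of_wlen_mul (reducedProd_pair_iff.1 h)

theorem ReducedProd.toWord_prod_append {l₁ l₂ : List (FreeGroup α)}
    (h : ReducedProd (l₁ ++ l₂)) :
    (l₁ ++ l₂).prod.toWord = l₁.prod.toWord ++ l₂.prod.toWord := by
  have h₁ := wlen_prod_le l₁
  have h₂ := wlen_prod_le l₂
  have h₃ := wlen_mul_le l₁.prod l₂.prod
  rw [ReducedProd, List.map_append, List.sum_append, List.prod_append] at h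
  rw [List.prod_append]
  exact toWord_mul_of_wlen_mul (by omega)

theorem ReducedProd.toWord_head_ne {x y : FreeGroup α} (h : ReducedProd [x⁻¹, y]) :
    ∀ c xs ys, x.toWord = c :: xs → y.toWord = c :: ys → False := by
  intro c xs ys hx hy
  have hred := FreeGroup.reduce_toWord (x⁻¹ * y)
  rw [h.toWord_mul, FreeGroup.toWord_inv, hx, hy] at hred
  have : FreeGroup.reduce (FreeGroup.invRev (c :: xs) ++ c :: ys) =
      FreeGroup.invRev xs ++ (c.1, !c.2) :: (c.1, !(!c.2)) :: ys := by
    rw [hred]; simp [FreeGroup.invRev]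
  exact FreeGroup.reduce.not this

end Words

namespace Decomp

variable {α : Type} [DecidableEq α] (dec : Decomp α)

theorem D_eq_singleton_of_mem {x p : FreeGroup α} (hp : p ∈ dec.D x) : dec.D p = [p] := by
  obtain ⟨s, t, hst⟩ := List.append_of_mem hp
  simpa using dec.infix_closed x s [p] t (by simp [hst])

theorem one_le_wlen_of_mem {x p : FreeGroup α} (hp : p ∈ dec.D x) : 1 ≤ wlen p := by
  refine Nat.one_le_iff_ne_zero.2 fun h => dec.one_notin_pieces ?_
  rw [wlen, List.length_eq_zero_iff, FreeGroup.toWord_eq_nil_iff] at h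
  exact h ▸ dec.mem_pieces x p hp

theorem reducedProd_of_infix {x : FreeGroup α} {l : List (FreeGroup α)} (hl : l <:+: dec.D x) :
    ReducedProd l := by
  obtain ⟨l₁, l₂, h⟩ := hl
  simpa only [dec.infix_closed x l₁ l l₂ h.symm] using dec.reduced l.prod

theorem toWord_eq_of_D_eq_append {x : FreeGroup α} {l₁ l₂ : List (FreeGroup α)}
    (h : dec.D x = l₁ ++ l₂) : x.toWord = l₁.prod.toWord ++ l₂.prod.toWord := by
  have hr : ReducedProd (l₁ ++ l₂) := h ▸ dec.reduced x
  rw [← hr.toWord_prod_append, ← h, dec.prod_eq]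

theorem wlen_eq_of_D_eq_append {x : FreeGroup α} {l₁ l₂ : List (FreeGroup α)}
    (h : dec.D x = l₁ ++ l₂) : wlen x = wlen l₁.prod + wlen l₂.prod := by
  simp [wlen, dec.toWord_eq_of_D_eq_append h]

theorem toWord_prod_prefix {x : FreeGroup α} {π : List (FreeGroup α)} (hπ : π <+: dec.D x) :
    π.prod.toWord <+: x.toWord := by
  obtain ⟨t, ht⟩ := hπ
  exact ⟨t.prod.toWord, (dec.toWord_eq_of_D_eq_append ht.symm).symm⟩

theorem wlen_prod_lt_of_prefix {x : FreeGroup α} {π π' : List (FreeGroup α)}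
    (hπ : π <+: dec.D x) (hπ' : π' <+: dec.D x) (hlt : π.length < π'.length) :
    wlen π.prod < wlen π'.prod := by
  obtain ⟨s, rfl⟩ := List.prefix_of_prefix_length_le hπ hπ' hlt.le
  obtain ⟨p, s, rfl⟩ := List.exists_cons_of_ne_nil (l := s) (by rintro rfl; simp at hlt)
  have hp : 1 ≤ wlen p := dec.one_le_wlen_of_mem (hπ'.subset (by simp))
  have hr : ReducedProd (π ++ p :: s) := dec.reducedProd_of_infix hπ'.isInfix
  have := wlen_prod_le π
  rw [ReducedProd] at hr
  simp only [List.map_append, List.sum_append, List.map_cons, List.sum_cons] at hr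
  omega

theorem toWord_eq_cons_of_D_eq_cons {x p : FreeGroup α} {l : List (FreeGroup α)}
    {c : α × Bool} {w : List (α × Bool)} (hx : dec.D x = p :: l) (hp : p.toWord = c :: w) :
    ∃ w', x.toWord = c :: w' := by
  obtain ⟨r, hr⟩ := dec.toWord_prod_prefix (π := [p])
    (hx ▸ List.cons_prefix_cons.2 ⟨rfl, List.nil_prefix⟩)
  rw [List.prod_singleton, hp] at hr
  exact ⟨w ++ r, by simp [← hr]⟩

/-- The first pieces of `Δ(x)` and `Δ(y)` would start `x` and `y` with the same letter. -/
theorem commonPrefix_D_eq_nil {x y : FreeGroup α} (h : ReducedProd [x⁻¹, y]) :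
    commonPrefix (dec.D x) (dec.D y) = [] := by
  rcases hx : dec.D x with _ | ⟨p, l⟩
  · rfl
  rcases hy : dec.D y with _ | ⟨q, l'⟩
  · rfl
  rw [commonPrefix, if_neg]
  rintro rfl
  obtain ⟨c, w, hw⟩ := List.exists_cons_of_ne_nil (l := p.toWord) fun hp =>
    (dec.one_le_wlen_of_mem (x := x) (hx ▸ List.mem_cons_self)).not_gt (by simp [wlen, hp])
  obtain ⟨wx, hwx⟩ := dec.toWord_eq_cons_of_D_eq_cons hx hw
  obtain ⟨wy, hwy⟩ := dec.toWord_eq_cons_of_D_eq_cons hy hw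
  exact h.toWord_head_ne c wx wy hwx hwy

theorem cSeq2_eq_nil {x y : FreeGroup α} (h : ReducedProd [x, y]) : cSeq2 dec.D x y = [] :=
  dec.commonPrefix_D_eq_nil (by rwa [inv_inv])

theorem D_eq_cSeq1_append_rSeq1 {x y : FreeGroup α} (h : ReducedProd [x, y]) :
    dec.D x = cSeq1 dec.D x y ++ rSeq1 dec.D x y := by
  simpa [dec.cSeq2_eq_nil h, seqInv] using dec.triangle₁ x y

theorem D_eq_rSeq2_append_seqInv_cSeq3 {x y : FreeGroup α} (h : ReducedProd [x, y]) :
    dec.D y = rSeq2 dec.D x y ++ seqInv (cSeq3 dec.D x y) := by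
  simpa [dec.cSeq2_eq_nil h] using dec.triangle₂ x y

theorem D_mul (g h : FreeGroup α) :
    dec.D (g * h) = cSeq1 dec.D g h ++ seqInv (rSeq3 dec.D g h) ++ seqInv (cSeq3 dec.D g h) := by
  rw [← inv_inv (g * h), dec.inv_eq, mul_inv_rev, dec.triangle₃, seqInv_append, seqInv_append,
    seqInv_seqInv, List.append_assoc]

theorem length_D_le_length_cSeq1_add {x y : FreeGroup α} (h : ReducedProd [x, y]) :
    (dec.D x).length ≤ (cSeq1 dec.D x y).length + dec.R := by
  have hlen := congrArg List.length (dec.D_eq_cSeq1_append_rSeq1 h)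
  have := dec.rBound₁ x y
  rw [List.length_append] at hlen
  omega

theorem length_D_le_length_commonPrefix_add {x y z : FreeGroup α} (hy : ReducedProd [x, y])
    (hz : ReducedProd [x, z]) :
    (dec.D x).length ≤ (commonPrefix (dec.D (x * y)) (dec.D (x * z))).length + dec.R := by
  have := min_length_le_length_commonPrefix (commonPrefix_prefix_left (dec.D x) (dec.D (x * y)))
    (commonPrefix_prefix_left (dec.D x) (dec.D (x * z))) (commonPrefix_prefix_right _ _)
    (commonPrefix_prefix_right _ _)
  have hy' := dec.length_D_le_length_cSeq1_add hy
  have hz' := dec.length_D_le_length_cSeq1_add hz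
  rw [cSeq1] at hy' hz'
  omega

/-- The words of `x * y` and `x * z` are the word of `x` followed by words starting with
different letters. -/
theorem wlen_prod_commonPrefix_le {x y z : FreeGroup α} (hy : ReducedProd [x, y])
    (hz : ReducedProd [x, z]) (hyz : ReducedProd [y⁻¹, z]) :
    wlen (commonPrefix (dec.D (x * y)) (dec.D (x * z))).prod ≤ wlen x := by
  have h₁ := dec.toWord_prod_prefix (commonPrefix_prefix_left (dec.D (x * y)) (dec.D (x * z)))
  have h₂ := dec.toWord_prod_prefix (commonPrefix_prefix_right (dec.D (x * y)) (dec.D (x * z)))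
  rw [hy.toWord_mul] at h₁
  rw [hz.toWord_mul] at h₂
  exact List.length_le_of_prefix_append_of_prefix_append h₁ h₂ hyz.toWord_head_ne

theorem length_commonPrefix_le {x y z : FreeGroup α} (hy : ReducedProd [x, y])
    (hz : ReducedProd [x, z]) (hyz : ReducedProd [y⁻¹, z]) :
    (commonPrefix (dec.D (x * y)) (dec.D (x * z))).length ≤
      (cSeq1 dec.D x y ++ seqInv (rSeq3 dec.D x y)).length := by
  by_contra! hlt
  have hX : wlen x ≤ wlen (cSeq1 dec.D x y ++ seqInv (rSeq3 dec.D x y)).prod := by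
    have h₁ := dec.wlen_eq_of_D_eq_append (dec.D_mul x y)
    have h₂ := dec.wlen_eq_of_D_eq_append (dec.D_eq_rSeq2_append_seqInv_cSeq3 hy)
    have h₃ := reducedProd_pair_iff.1 hy
    omega
  have := dec.wlen_prod_lt_of_prefix ⟨_, (dec.D_mul x y).symm⟩ (commonPrefix_prefix_left _ _) hlt
  have := dec.wlen_prod_commonPrefix_le hy hz hyz
  omega

/-- Writing `g = t₁⁻¹ d`, the triangle of `(t₁⁻¹, d)` exhibits a common tail of `Δ(g)` and `Δ(d)`;
the triangle of `(g, h)` exhibits `(c̲₂)` as a tail of `Δ(g)`, and the two tails differ in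
length by at most `2R`. -/
theorem exists_common_suffix {g h d : FreeGroup α} (hd : IsCommon2Path g h d) :
    ∃ F F' G : List (FreeGroup α), dec.D d = F ++ G ∧ seqInv (cSeq2 dec.D g h) = F' ++ G ∧
      F.length ≤ 2 * dec.R ∧ F'.length ≤ 2 * dec.R := by
  obtain ⟨t₁, t₂, rfl, rfl, h₁, h₂, h₃⟩ := hd
  have ha : cSeq1 dec.D (t₁⁻¹ * d) (d⁻¹ * t₂) =
      commonPrefix (dec.D (t₁⁻¹ * d)) (dec.D (t₁⁻¹ * t₂)) := by
    rw [cSeq1, show t₁⁻¹ * d * (d⁻¹ * t₂) = t₁⁻¹ * t₂ by group]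
  have hXa := dec.length_commonPrefix_le h₁ h₃ h₂
  have haX := dec.length_D_le_length_commonPrefix_add h₁ h₃
  rw [← ha] at hXa haX
  have hc : (cSeq1 dec.D t₁⁻¹ d).length ≤ (dec.D t₁⁻¹).length :=
    (commonPrefix_prefix_left _ _).length_le
  have := dec.rBound₁ (t₁⁻¹ * d) (d⁻¹ * t₂)
  have := dec.rBound₂ t₁⁻¹ d
  have := dec.rBound₃ t₁⁻¹ d
  simp only [List.length_append, length_seqInv] at hXa
  have hDd := dec.D_eq_rSeq2_append_seqInv_cSeq3 h₁
  rcases List.append_eq_append_iff.1 ((dec.triangle₁ _ _).symm.trans (dec.D_mul t₁⁻¹ d)) with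
    ⟨F', hX, hF'⟩ | ⟨F, hY, hF⟩
  · refine ⟨_, F', _, hDd, hF', by omega, ?_⟩
    have := congrArg List.length hX
    simp only [List.length_append, length_seqInv] at this
    omega
  · refine ⟨_ ++ F, [], _, by rw [hDd, hF, List.append_assoc], by simp, ?_, by simp⟩
    have := congrArg List.length hY
    simp only [List.length_append, length_seqInv] at this ⊢
    omega

end Decomp

local notation "ζ[" φ ", " ω "]" => zetaL (fun p u v => φ p * ω u v)

section Zeta

variable {α : Type}

theorem zetaL_append (A : FreeGroup α → FreeGroup α → FreeGroup α → ℝ)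
    (l₁ l₂ : List (FreeGroup α)) (g' i : FreeGroup α) :
    zetaL A (l₁ ++ l₂) g' i = zetaL A l₁ (l₂.prod * g') i + zetaL A l₂ g' i := by
  induction l₁ with
  | nil => simp [zetaL]
  | cons p t ih =>
    rw [List.cons_append, zetaL, zetaL, ih, List.prod_append, mul_assoc]
    ring

theorem abs_zetaL_le {A : FreeGroup α → FreeGroup α → FreeGroup α → ℝ} {K : ℝ}
    {l : List (FreeGroup α)} (hA : ∀ p ∈ l, ∀ u v, |A p u v| ≤ K) (g' i : FreeGroup α) :
    |zetaL A l g' i| ≤ l.length * K := by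
  induction l with
  | nil => simp [zetaL]
  | cons p t ih =>
    have := abs_add_le (A p (t.prod * g') i) (zetaL A t g' i)
    have := hA p List.mem_cons_self (t.prod * g') i
    have := ih fun q hq => hA q (List.mem_cons_of_mem p hq)
    simp only [zetaL, List.length_cons, Nat.cast_succ]
    linarith

variable (φ : FreeGroup α → ℝ) (ω : FreeGroup α → FreeGroup α → ℝ)

theorem abs_zetaL_mul_le {B C : ℝ} {l : List (FreeGroup α)} (hB : ∀ p ∈ l, |φ p| ≤ B)
    (hC : ∀ u v, |ω u v| ≤ C) (g' i : FreeGroup α) :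
    |ζ[φ, ω] l g' i| ≤ l.length * (B * C) :=
  abs_zetaL_le (fun p hp u v => by
    rw [abs_mul]
    exact mul_le_mul (hB p hp) (hC u v) (abs_nonneg _) ((abs_nonneg _).trans (hB p hp))) g' i

def pairSum (h i : FreeGroup α) : List (FreeGroup α) → ℝ
  | [] => 0
  | p :: rest => φ p * (ω (rest.prod * h) i - ω (p * (rest.prod * h)) i) + pairSum h i rest

theorem zetaL_add_zetaL_seqInv {l : List (FreeGroup α)} (hsym : ∀ p ∈ l, φ p⁻¹ = -φ p)
    (h i : FreeGroup α) :
    ζ[φ, ω] l h i + ζ[φ, ω] (seqInv l) (l.prod * h) i = pairSum φ ω h i l := by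
  induction l with
  | nil => simp [zetaL, pairSum, seqInv]
  | cons p rest ih =>
    rw [pairSum, seqInv_cons, zetaL_append, ← ih fun q hq => hsym q (List.mem_cons_of_mem p hq)]
    simp only [zetaL, List.prod_cons, List.prod_nil, one_mul, mul_assoc,
      inv_mul_cancel_left, hsym p List.mem_cons_self]
    ring

theorem abs_pairSum_append_sub_le {B C : ℝ} {l₁ : List (FreeGroup α)}
    (hB : ∀ p ∈ l₁, |φ p| ≤ B) (hC : ∀ u v, |ω u v| ≤ C) (l₂ : List (FreeGroup α))
    (h i : FreeGroup α) :
    |pairSum φ ω h i (l₁ ++ l₂) - pairSum φ ω h i l₂| ≤ l₁.length * (2 * B * C) := by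
  induction l₁ with
  | nil => simp
  | cons p t ih =>
    set σ := (t ++ l₂).prod * h
    have hterm : |φ p * (ω σ i - ω (p * σ) i)| ≤ B * (2 * C) := by
      have hp := hB p List.mem_cons_self
      rw [abs_mul]
      refine mul_le_mul hp ((abs_sub _ _).trans ?_) (abs_nonneg _) ((abs_nonneg _).trans hp)
      linarith [hC σ i, hC (p * σ) i]
    have := abs_add_le (φ p * (ω σ i - ω (p * σ) i))
      (pairSum φ ω h i (t ++ l₂) - pairSum φ ω h i l₂)
    have := ih fun q hq => hB q (List.mem_cons_of_mem p hq)
    simp only [List.cons_append, pairSum, List.length_cons, Nat.cast_succ, add_sub_assoc]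
    linarith

theorem abs_pairSum_append_sub_pairSum_append_le {B C : ℝ} {l₁ l₂ : List (FreeGroup α)}
    (hB₁ : ∀ p ∈ l₁, |φ p| ≤ B) (hB₂ : ∀ p ∈ l₂, |φ p| ≤ B) (hC : ∀ u v, |ω u v| ≤ C)
    (l : List (FreeGroup α)) (h i : FreeGroup α) :
    |pairSum φ ω h i (l₁ ++ l) - pairSum φ ω h i (l₂ ++ l)| ≤
      (l₁.length + l₂.length) * (2 * B * C) := by
  have h₁ := abs_pairSum_append_sub_le φ ω hB₁ hC l h i
  have h₂ := abs_pairSum_append_sub_le φ ω hB₂ hC l h i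
  have := abs_sub_le (pairSum φ ω h i (l₁ ++ l)) (pairSum φ ω h i l) (pairSum φ ω h i (l₂ ++ l))
  rw [abs_sub_comm (pairSum φ ω h i l)] at this
  linarith

theorem zetaL_mul_sub (hω : ∀ u v w, d2 ω u v w = 0) (l : List (FreeGroup α)) (h i : FreeGroup α) :
    ζ[φ, ω] l 1 (h * i) - ζ[φ, ω] l 1 h = ζ[φ, ω] l h i - (l.map φ).sum * ω h i := by
  induction l with
  | nil => simp [zetaL]
  | cons p rest ih =>
    have hcoc := hω rest.prod h i
    simp only [zetaL, List.map_cons, List.sum_cons, mul_one] at ih ⊢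
    rw [d2] at hcoc
    linear_combination ih + φ p * hcoc

theorem d2_d1 (ψ : FreeGroup α → ℝ) (u v w : FreeGroup α) : d2 (d1 ψ) u v w = 0 := by
  simp only [d2, d1, mul_assoc]
  ring

end Zeta

namespace Decomp

variable {α : Type} [DecidableEq α] (dec : Decomp α)

theorem zetaL_D_eq_append3 (A : FreeGroup α → FreeGroup α → FreeGroup α → ℝ) {x : FreeGroup α}
    {l₁ l₂ l₃ : List (FreeGroup α)} (h : dec.D x = l₁ ++ l₂ ++ l₃) (g' i : FreeGroup α) :
    zetaL A (dec.D x) g' i =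
      zetaL A l₁ (l₁.prod⁻¹ * x * g') i + zetaL A l₂ (l₃.prod * g') i + zetaL A l₃ g' i := by
  have hx : l₁.prod⁻¹ * x * g' = l₂.prod * (l₃.prod * g') := by
    rw [← dec.prod_eq x, h]
    simp only [List.prod_append]
    group
  rw [h, zetaL_append, zetaL_append, hx]

variable (φ : FreeGroup α → ℝ) (ω : FreeGroup α → FreeGroup α → ℝ)

theorem zetaD_add_zetaD_inv {d : FreeGroup α} (hsym : ∀ p ∈ dec.D d, φ p⁻¹ = -φ p)
    (h i : FreeGroup α) :
    zetaD dec.D φ ω d h i + zetaD dec.D φ ω d⁻¹ (d * h) i = pairSum φ ω h i (dec.D d) := by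
  rw [zetaD, zetaD, dec.inv_eq, ← zetaL_add_zetaL_seqInv φ ω hsym, dec.prod_eq]

theorem d2_zeta_eq (hω : ∀ u v w, d2 ω u v w = 0) {g : FreeGroup α}
    (hsum : ((dec.D g).map φ).sum = φ g) (hsym : ∀ p ∈ dec.D g, φ p⁻¹ = -φ p)
    (h i : FreeGroup α) :
    φ g * ω h i + d2 (fun a b => zetaD dec.D φ ω a 1 b) g h i =
      pairSum φ ω h i (seqInv (cSeq2 dec.D g h)) +
        (ζ[φ, ω] (rSeq1 dec.D g h) ((seqInv (cSeq2 dec.D g h)).prod * h) i +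
          ζ[φ, ω] (rSeq2 dec.D g h) (seqInv (cSeq3 dec.D g h)).prod i -
          ζ[φ, ω] (seqInv (rSeq3 dec.D g h)) (seqInv (cSeq3 dec.D g h)).prod i) := by
  have hζg := dec.zetaL_D_eq_append3 (fun p u v => φ p * ω u v) (dec.triangle₁ g h) h i
  have hηh := dec.zetaL_D_eq_append3 (fun p u v => φ p * ω u v) (dec.triangle₂ g h) 1 i
  have hηgh := dec.zetaL_D_eq_append3 (fun p u v => φ p * ω u v) (dec.D_mul g h) 1 i
  have hpair := zetaL_add_zetaL_seqInv φ ω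
    (fun p hp => hsym p (dec.triangle₁ g h ▸ List.mem_append_right _ hp)) h i
  rw [seqInv_seqInv, prod_seqInv] at hpair
  have hcoc := zetaL_mul_sub φ ω hω (dec.D g) h i
  rw [hsum] at hcoc
  simp only [mul_one, mul_assoc] at hζg hηh hηgh
  simp only [d2, zetaD]
  linarith

theorem abs_d2_zeta_sub_pairSum_le (hω : ∀ u v w, d2 ω u v w = 0) {g : FreeGroup α}
    (hsum : ((dec.D g).map φ).sum = φ g) (hsym : ∀ p ∈ dec.D g, φ p⁻¹ = -φ p) {B C : ℝ}
    (hB0 : 0 ≤ B) (hB : ∀ x, ∀ p ∈ dec.D x, |φ p| ≤ B) (hC : ∀ u v, |ω u v| ≤ C)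
    (h i : FreeGroup α) :
    |φ g * ω h i + d2 (fun a b => zetaD dec.D φ ω a 1 b) g h i -
      pairSum φ ω h i (seqInv (cSeq2 dec.D g h))| ≤ 3 * dec.R * (B * C) := by
  rw [dec.d2_zeta_eq φ ω hω hsum hsym, add_sub_cancel_left]
  have hBC : 0 ≤ B * C := mul_nonneg hB0 ((abs_nonneg _).trans (hC 1 1))
  have h₁ := abs_zetaL_mul_le φ ω (l := rSeq1 dec.D g h)
    (fun p hp => hB g p (List.mem_of_mem_drop (List.mem_of_mem_take hp))) hC
    ((seqInv (cSeq2 dec.D g h)).prod * h) i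
  have h₂ := abs_zetaL_mul_le φ ω (l := rSeq2 dec.D g h)
    (fun p hp => hB h p (List.mem_of_mem_drop (List.mem_of_mem_take hp))) hC
    (seqInv (cSeq3 dec.D g h)).prod i
  have h₃ := abs_zetaL_mul_le φ ω (l := seqInv (rSeq3 dec.D g h))
    (fun p hp => hB (g * h) p (dec.D_mul g h ▸ List.mem_append_left _ (List.mem_append_right _ hp)))
    hC (seqInv (cSeq3 dec.D g h)).prod i
  have e₁ := mul_le_mul_of_nonneg_right (by exact_mod_cast dec.rBound₁ g h :
    ((rSeq1 dec.D g h).length : ℝ) ≤ dec.R) hBC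
  have e₂ := mul_le_mul_of_nonneg_right (by exact_mod_cast dec.rBound₂ g h :
    ((rSeq2 dec.D g h).length : ℝ) ≤ dec.R) hBC
  have e₃ := mul_le_mul_of_nonneg_right (by simpa using dec.rBound₃ g h :
    ((seqInv (rSeq3 dec.D g h)).length : ℝ) ≤ dec.R) hBC
  have := abs_sub (ζ[φ, ω] (rSeq1 dec.D g h) ((seqInv (cSeq2 dec.D g h)).prod * h) i +
    ζ[φ, ω] (rSeq2 dec.D g h) (seqInv (cSeq3 dec.D g h)).prod i)
    (ζ[φ, ω] (seqInv (rSeq3 dec.D g h)) (seqInv (cSeq3 dec.D g h)).prod i)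
  have := abs_add_le (ζ[φ, ω] (rSeq1 dec.D g h) ((seqInv (cSeq2 dec.D g h)).prod * h) i)
    (ζ[φ, ω] (rSeq2 dec.D g h) (seqInv (cSeq3 dec.D g h)).prod i)
  linarith

theorem decQM_of_mem (lam : FreeGroup α → ℝ) {x p : FreeGroup α} (hp : p ∈ dec.D x) :
    decQM dec.D lam p = lam p := by
  simp [decQM, dec.D_eq_singleton_of_mem hp]

theorem sum_map_decQM (lam : FreeGroup α → ℝ) (x : FreeGroup α) :
    ((dec.D x).map (decQM dec.D lam)).sum = decQM dec.D lam x := by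
  rw [List.map_congr_left fun p hp => dec.decQM_of_mem lam hp, decQM]

theorem decQM_inv_of_mem {lam : FreeGroup α → ℝ} (hsym : ∀ p ∈ dec.pieces, lam p⁻¹ = -lam p)
    {x p : FreeGroup α} (hp : p ∈ dec.D x) : decQM dec.D lam p⁻¹ = -decQM dec.D lam p := by
  have hp' : p⁻¹ ∈ dec.D p⁻¹ := by simp [dec.inv_eq, dec.D_eq_singleton_of_mem hp, seqInv]
  rw [dec.decQM_of_mem lam hp', dec.decQM_of_mem lam hp, hsym p (dec.mem_pieces x p hp)]

theorem exists_abs_decQM_le {lam : FreeGroup α → ℝ} (hB : ∃ B, ∀ p ∈ dec.pieces, |lam p| ≤ B) :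
    ∃ B ≥ 0, ∀ x, ∀ p ∈ dec.D x, |decQM dec.D lam p| ≤ B := by
  obtain ⟨B, hB⟩ := hB
  refine ⟨max B 0, le_max_right B 0, fun x p hp => ?_⟩
  rw [dec.decQM_of_mem lam hp]
  exact (hB p (dec.mem_pieces x p hp)).trans (le_max_left B 0)

end Decomp

theorem close_to_two_path_sum_general {α : Type} [DecidableEq α]
    (dec : Decomp α)
    (φ : FreeGroup α → ℝ) (ω : FreeGroup α → FreeGroup α → ℝ)
    (hφ : IsDecomposable dec φ)
    (hω : ∃ ψ : FreeGroup α → ℝ, IsSymmetricMap ψ ∧ IsQuasimorphism ψ ∧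
      ω = fun g h => d1 ψ g h)
    (hωbd : ∃ C : ℝ, ∀ g h, |ω g h| ≤ C) :
    ∃ C > (0 : ℝ), ∀ g h i d : FreeGroup α, IsCommon2Path g h d →
      |φ g * ω h i + d2 (fun a b => zetaD dec.D φ ω a 1 b) g h i -
        (zetaD dec.D φ ω d h i + zetaD dec.D φ ω d⁻¹ (d * h) i)| ≤ C := by
  obtain ⟨lam, hlam, hsym, rfl⟩ := hφ
  obtain ⟨B, hB0, hB⟩ := dec.exists_abs_decQM_le hlam
  obtain ⟨C, hC⟩ := hωbd
  have hBC : 0 ≤ B * C := mul_nonneg hB0 ((abs_nonneg _).trans (hC 1 1))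
  have hcoc : ∀ u v w, d2 ω u v w = 0 := by
    obtain ⟨ψ, -, -, rfl⟩ := hω
    exact d2_d1 ψ
  refine ⟨11 * dec.R * (B * C) + 1, by positivity, fun g h i d hd => ?_⟩
  obtain ⟨F, F', G, hF, hF', hFR, hF'R⟩ := dec.exists_common_suffix hd
  have hinv := fun x p (hp : p ∈ dec.D x) => dec.decQM_inv_of_mem hsym hp
  rw [dec.zetaD_add_zetaD_inv _ ω (hinv d)]
  have h₁ := dec.abs_d2_zeta_sub_pairSum_le _ ω hcoc (dec.sum_map_decQM lam g) (hinv g) hB0 hB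
    hC h i
  have h₂ := abs_pairSum_append_sub_pairSum_append_le _ ω (l₁ := F') (l₂ := F)
    (fun p hp => hB g p
      (dec.triangle₁ g h ▸ List.mem_append_right _ (hF' ▸ List.mem_append_left G hp)))
    (fun p hp => hB d p (hF ▸ List.mem_append_left G hp)) hC G h i
  rw [← hF, ← hF'] at h₂
  have hlen : ((F'.length : ℝ) + F.length) * (2 * B * C) ≤ 4 * dec.R * (2 * B * C) :=
    mul_le_mul_of_nonneg_right (by exact_mod_cast (by omega : F'.length + F.length ≤ 4 * dec.R))
      (by linarith)
  calc _ ≤ _ := abs_sub_le _ (pairSum _ ω h i (seqInv (cSeq2 dec.D g h))) _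
    _ ≤ _ := by linarith

/-- Proposition 4.6: `φ(g)·ω(h,i) + δ²η(g,h,i)` is uniformly close to
`ζ(d,h,i) + ζ(d⁻¹, dh, i)` where `d` is the common 2-path of `(g,h)`. -/
theorem close_to_two_path_sum {α : Type} [Fintype α] [DecidableEq α]
    (hab : ∃ a b : α, a ≠ b) (dec : Decomp α)
    (φ : FreeGroup α → ℝ) (ω : FreeGroup α → FreeGroup α → ℝ)
    (hφ : IsDecomposable dec φ)
    (hω : ∃ ψ : FreeGroup α → ℝ, IsSymmetricMap ψ ∧ IsQuasimorphism ψ ∧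
      ω = fun g h => d1 ψ g h)
    (hωbd : ∃ C : ℝ, ∀ g h, |ω g h| ≤ C)
    (hωc : DeltaContinuousCocycle dec.D ω) :
    ∃ C > (0 : ℝ), ∀ g h i d : FreeGroup α, IsCommon2Path g h d →
      |φ g * ω h i + d2 (fun a b => zetaD dec.D φ ω a 1 b) g h i -
        (zetaD dec.D φ ω d h i + zetaD dec.D φ ω d⁻¹ (d * h) i)| ≤ C :=
  close_to_two_path_sum_general dec φ ω hφ hω hωbd
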